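/- Let a be a weak composition of length n with at least one nonzero entry and let k be the largest index with a_k ≠ 0. Then the fundamental slide polynomial 𝔉_a is quasisymmetric in the variables x_1,…,x_k if and only if a is quasi-flat. Moreover, when a is quasi-flat, 𝔉_a = F_{flat(a)}(x_1,…,x_k). -/

import Mathlib

open scoped Classical

namespace SlidePaper

/-- Sum of the first `i` entries of a weak composition of length `n`. -/
def psum {n : ℕ} (a : Fin n → ℕ) (i : ℕ) : ℕ :=
  ∑ j ∈ Finset.univ.filter (fun j : Fin n => (j : ℕ) < i), a j

/-- `b` dominates `a`: all partial sums of `b` are at least those of `a`. -/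
def Dominates {n : ℕ} (b a : Fin n → ℕ) : Prop :=
  ∀ i : Fin (n + 1), psum a i ≤ psum b i

/-- The flattening of a weak composition: the list of its nonzero entries in order. -/
def flat {n : ℕ} (a : Fin n → ℕ) : List ℕ :=
  (List.ofFn a).filter (fun x => x ≠ 0)

/-- `β` refines `α`: `β` splits into consecutive blocks with sums `α₁, α₂, …`. -/
def Refines (β α : List ℕ) : Prop :=
  ∃ L : List (List ℕ), L.flatten = β ∧ L.map List.sum = α

/-- All weak compositions of length `n` with entries at most `k`. -/
def wcFinset (n k : ℕ) : Finset (Fin n → ℕ) :=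
  Fintype.piFinset fun _ => Finset.range (k + 1)

/-- The monomial slide polynomial `𝔐_a`. -/
noncomputable def slideM {n : ℕ} (a : Fin n → ℕ) : MvPolynomial (Fin n) ℤ :=
  ∑ b ∈ (wcFinset n (∑ i, a i)).filter (fun b => Dominates b a ∧ flat b = flat a),
    MvPolynomial.monomial (Finsupp.equivFunOnFinite.symm b) 1

/-- The fundamental slide polynomial `𝔉_a`. -/
noncomputable def slideF {n : ℕ} (a : Fin n → ℕ) : MvPolynomial (Fin n) ℤ :=
  ∑ b ∈ (wcFinset n (∑ i, a i)).filter (fun b => Dominates b a ∧ Refines (flat b) (flat a)),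
    MvPolynomial.monomial (Finsupp.equivFunOnFinite.symm b) 1

/-- A weak composition is quasi-flat if its nonzero entries occupy consecutive positions. -/
def QuasiFlat {n : ℕ} (a : Fin n → ℕ) : Prop :=
  ∀ i j l : Fin n, i ≤ j → j ≤ l → a i ≠ 0 → a l ≠ 0 → a j ≠ 0

/-- `b` strongly dominates `a`. -/
def StronglyDominates {n : ℕ} (b a : Fin n → ℕ) : Prop :=
  Dominates b a ∧ ∀ c : Fin n → ℕ, Dominates c a → flat c = flat b → Dominates c b

/-- The exponent vector placing the parts of `α` at the positions `i`. -/
noncomputable def placeExp {n : ℕ} (α : List ℕ) (i : Fin α.length → Fin n) : Fin n →₀ ℕ :=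
  ∑ t : Fin α.length, Finsupp.single (i t) (α.get t)

/-- `f` is quasisymmetric in the variables `x_1, …, x_k` (0-indexed: `x_0, …, x_{k-1}`). -/
def IsQuasisymmetricIn {n : ℕ} (k : ℕ) (f : MvPolynomial (Fin n) ℤ) : Prop :=
  ∀ α : List ℕ, (∀ x ∈ α, 0 < x) →
    ∀ i j : Fin α.length → Fin n, StrictMono i → StrictMono j →
      (∀ t, (i t : ℕ) < k) → (∀ t, (j t : ℕ) < k) →
      MvPolynomial.coeff (placeExp α i) f = MvPolynomial.coeff (placeExp α j) f

/-- The monomial quasisymmetric polynomial `M_α(x_1, …, x_k)` inside `ℤ[x_1, …, x_n]`. -/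
noncomputable def Mqs (n k : ℕ) (α : List ℕ) : MvPolynomial (Fin n) ℤ :=
  ∑ i ∈ (Finset.univ : Finset (Fin α.length → Fin n)).filter
      (fun i : Fin α.length → Fin n => StrictMono i ∧ ∀ t, (i t : ℕ) < k),
    ∏ t : Fin α.length, (MvPolynomial.X (i t) : MvPolynomial (Fin n) ℤ) ^ α.get t

/-- The fundamental quasisymmetric polynomial `F_α(x_1, …, x_k)` inside `ℤ[x_1, …, x_n]`. -/
noncomputable def Fqs (n k : ℕ) (α : List ℕ) : MvPolynomial (Fin n) ℤ :=
  ∑ c ∈ (Finset.univ : Finset (Composition α.sum)).filter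
      (fun c => Refines c.blocks α ∧ c.blocks.length ≤ k),
    Mqs n k c.blocks

/-- Place the weak composition `a` (of length `N`) at offset `k` inside length `M`. -/
def shiftComp {N : ℕ} (k M : ℕ) (a : Fin N → ℕ) : Fin M → ℕ :=
  fun i => if h : k ≤ (i : ℕ) ∧ (i : ℕ) - k < N then a ⟨(i : ℕ) - k, h.2⟩ else 0

/-- Spread the values `g` to positions `ι` inside a weak composition of length `n`. -/
def spread {l n : ℕ} (ι : Fin l → Fin n) (g : Fin l → ℕ) : Fin n → ℕ :=
  fun i => ∑ k, if ι k = i then g k else 0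

/-- The monomial quasisymmetric function `M_α` in infinitely many variables. -/
noncomputable def MqsFun (α : List ℕ) : MvPowerSeries ℕ ℤ :=
  fun d => if ∃ i : Fin α.length → ℕ, StrictMono i ∧
      d = ∑ t : Fin α.length, Finsupp.single (i t) (α.get t) then 1 else 0

/-- The fundamental quasisymmetric function `F_α` in infinitely many variables. -/
noncomputable def FqsFun (α : List ℕ) : MvPowerSeries ℕ ℤ :=
  ∑ c ∈ (Finset.univ : Finset (Composition α.sum)).filter (fun c => Refines c.blocks α),
    MqsFun c.blocks

/-- The cells of the Young diagram of `lam` (French notation): row `r` (from the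
bottom, 0-indexed) has `lam.get r` cells. -/
abbrev Cells (lam : List ℕ) := Σ r : Fin lam.length, Fin (lam.get r)

/-- A filling of `lam` with entries in `{1, …, n}` (encoded as `Fin n`) is a semistandard
Young tableau: rows weakly increase left to right, columns strictly increase bottom to top. -/
def IsSSYT {n : ℕ} {lam : List ℕ} (T : Cells lam → Fin n) : Prop :=
  (∀ (r : Fin lam.length) (c c' : Fin (lam.get r)), c ≤ c' → T ⟨r, c⟩ ≤ T ⟨r, c'⟩) ∧
  (∀ (r r' : Fin lam.length) (c' : Fin (lam.get r')) (h : (c' : ℕ) < lam.get r),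
      (r : ℕ) < (r' : ℕ) → T ⟨r, ⟨c', h⟩⟩ < T ⟨r', c'⟩)

/-- The weight of a filling: the `v`-th entry counts the occurrences of the value `v`. -/
def wtT {n : ℕ} {lam : List ℕ} (T : Cells lam → Fin n) : Fin n → ℕ :=
  fun v => (Finset.univ.filter (fun x : Cells lam => T x = v)).card

/-- A filling is quasi-Yamanouchi if for every value `v > 1`, the leftmost occurrence of `v`
lies weakly left of some occurrence of `v - 1`. -/
def IsQY {n : ℕ} {lam : List ℕ} (T : Cells lam → Fin n) : Prop :=
  ∀ (v : Fin n) (x : Cells lam), T x = v → 0 < (v : ℕ) →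
    (∀ y : Cells lam, T y = v → (x.2 : ℕ) ≤ (y.2 : ℕ)) →
    ∃ z : Cells lam, (T z : ℕ) + 1 = (v : ℕ) ∧ (x.2 : ℕ) ≤ (z.2 : ℕ)

/-- The Schur polynomial `s_lam(x_1, …, x_n)` as the generating function of
semistandard Young tableaux. -/
noncomputable def schurPoly (n : ℕ) (lam : List ℕ) : MvPolynomial (Fin n) ℤ :=
  ∑ T ∈ (Finset.univ : Finset (Cells lam → Fin n)).filter (fun T => IsSSYT T),
    MvPolynomial.monomial (Finsupp.equivFunOnFinite.symm (wtT T)) 1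

/-- One destandardization step on fillings: for some value `v` occurring in `T` whose
leftmost occurrence is strictly right of every occurrence of `v - 1`, every `v` is
decremented to `v - 1`. -/
def TabStep {n : ℕ} {lam : List ℕ} (T T' : Cells lam → Fin n) : Prop :=
  ∃ v : Fin n, 0 < (v : ℕ) ∧ (∃ x, T x = v) ∧
    (∀ x y : Cells lam, T x = v → (T y : ℕ) + 1 = (v : ℕ) → (y.2 : ℕ) < (x.2 : ℕ)) ∧
    ∀ x : Cells lam, (T' x : ℕ) = if T x = v then (v : ℕ) - 1 else (T x : ℕ)

/-- The reading word of a set of crosses: rows are read from top to bottom, each row from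
left to right, the cross in (0-indexed) row `i` and column `j` recording the letter `i + j`
(representing the simple transposition swapping `i + j` and `i + j + 1` of `{0, 1, 2, …}`). -/
def readWord (P : Finset (ℕ × ℕ)) : List ℕ :=
  ((List.range (P.sup Prod.fst + 1)).reverse).flatMap
    (fun i => ((List.range (P.sup Prod.snd + 1)).filter (fun j => decide ((i, j) ∈ P))).map
      (fun j => i + j))

/-- The permutation `s_{i_ℓ} ⋯ s_{i_1}` associated to the word `(i_1, …, i_ℓ)`,
where `s_k` swaps `k` and `k + 1`. -/
def wordPerm (l : List ℕ) : Equiv.Perm ℕ :=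
  ((l.map (fun k => Equiv.swap k (k + 1))).reverse).prod

/-- A word is reduced if no shorter word has the same product. -/
def IsReducedWord (l : List ℕ) : Prop :=
  ∀ l' : List ℕ, wordPerm l' = wordPerm l → l.length ≤ l'.length

/-- `P` is a reduced pipe dream of shape `w`: the pipes trace out `w` and no two pipes
cross more than once, equivalently the reading word of `P` is a reduced word for `w`. -/
def IsPD (w : Equiv.Perm ℕ) (P : Finset (ℕ × ℕ)) : Prop :=
  wordPerm (readWord P) = w ∧ IsReducedWord (readWord P)

/-- `P` is a quasi-Yamanouchi pipe dream of shape `w`: for every row, the westernmost cross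
is in the first column or lies weakly west of some cross in the row above. -/
def IsQPD (w : Equiv.Perm ℕ) (P : Finset (ℕ × ℕ)) : Prop :=
  IsPD w P ∧ ∀ i j : ℕ, (i, j) ∈ P → (∀ j', (i, j') ∈ P → j ≤ j') →
    (j = 0 ∨ ∃ j', (i + 1, j') ∈ P ∧ j ≤ j')

/-- One destandardization step on pipe dreams: a row with no cross in the first column,
all of whose crosses lie strictly east of every cross in the row above, has all its
crosses moved one step northwest. -/
def PDStep (P P' : Finset (ℕ × ℕ)) : Prop :=
  ∃ r : ℕ, (∃ j, (r, j) ∈ P) ∧ (r, 0) ∉ P ∧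
    (∀ j j', (r, j) ∈ P → (r + 1, j') ∈ P → j' < j) ∧
    P' = P.filter (fun p => p.1 ≠ r) ∪
      (P.filter (fun p => p.1 = r)).image (fun p => (r + 1, p.2 - 1))

/-- The number of crosses of `P` in (0-indexed) row `i`. -/
def rowWt (P : Finset (ℕ × ℕ)) (i : ℕ) : ℕ := (P.filter (fun p => p.1 = i)).card

/-- The weight of a pipe dream, as a weak composition of length `n`. -/
def wtFin (n : ℕ) (P : Finset (ℕ × ℕ)) : Fin n → ℕ := fun i => rowWt P (i : ℕ)

/-- The flattened weight of a pipe dream: the list of nonzero row counts, bottom row first. -/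
def flatWt (P : Finset (ℕ × ℕ)) : List ℕ :=
  ((List.range (P.sup Prod.fst + 1)).map (rowWt P)).filter (fun x => x ≠ 0)

/-- The Schubert polynomial of `w` in the variables `x_1, …, x_n`, as the generating
function of reduced pipe dreams of shape `w`. -/
noncomputable def SchubertPoly (n : ℕ) (w : Equiv.Perm ℕ) : MvPolynomial (Fin n) ℤ :=
  ∑ᶠ P ∈ {P : Finset (ℕ × ℕ) | IsPD w P},
    MvPolynomial.monomial (Finsupp.equivFunOnFinite.symm (wtFin n P)) 1

/-- The Lehmer code of `w` (0-indexed): `lehmer w i` counts `j > i` with `w j < w i`. -/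
noncomputable def lehmer (w : Equiv.Perm ℕ) (i : ℕ) : ℕ :=
  Set.ncard {j : ℕ | i < j ∧ w j < w i}

/-- The Lehmer code of `w` as a weak composition of length `n`. -/
noncomputable def lehmerFin (n : ℕ) (w : Equiv.Perm ℕ) : Fin n → ℕ :=
  fun i => lehmer w (i : ℕ)

/-- The number of inversions of `w`. -/
noncomputable def invCount (w : Equiv.Perm ℕ) : ℕ :=
  Set.ncard {p : ℕ × ℕ | p.1 < p.2 ∧ w p.2 < w p.1}

/-- The largest entry of the Lehmer code of `w`. -/
noncomputable def maxLehmer (w : Equiv.Perm ℕ) : ℕ :=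
  sSup (Set.range (lehmer w))

/-- The (0-indexed) position of the first descent of `w`. -/
noncomputable def firstDescent (w : Equiv.Perm ℕ) : ℕ :=
  sInf {i : ℕ | w (i + 1) < w i}

/-- `δ(w) = 1` if every position attaining `max(L(w))` is at or before the first descent,
and `δ(w) = 0` otherwise. -/
noncomputable def delta (w : Equiv.Perm ℕ) : ℤ :=
  if ∀ i : ℕ, lehmer w i = maxLehmer w → i ≤ firstDescent w then 1 else 0

/-- `η(w) = inv(w) − max(L(w)) + δ(w) − min{i : w_i > w_{i+1}}`. -/
noncomputable def eta (w : Equiv.Perm ℕ) : ℤ :=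
  (invCount w : ℤ) - (maxLehmer w : ℤ) + delta w - ((firstDescent w : ℤ) + 1)

/-- The decomposition of a list into maximal strictly increasing runs. -/
def runsStrict : List ℕ → List (List ℕ)
  | [] => []
  | x :: rest =>
    match runsStrict rest, rest with
    | r :: rs, y :: _ => if x < y then (x :: r) :: rs else [x] :: r :: rs
    | _, _ => [[x]]

/-- The descent composition of a word: lengths of its maximal increasing runs, a new run
beginning whenever a letter is followed by a weakly smaller letter. -/
def desStrict (l : List ℕ) : List ℕ := (runsStrict l).map List.length

/-- The decomposition of a list into maximal weakly increasing runs. -/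
def runsWeak : List ℕ → List (List ℕ)
  | [] => []
  | x :: rest =>
    match runsWeak rest, rest with
    | r :: rs, y :: _ => if x ≤ y then (x :: r) :: rs else [x] :: r :: rs
    | _, _ => [[x]]

/-- The descent composition of a word: the lengths of its maximal weakly increasing runs. -/
def desComp (l : List ℕ) : List ℕ := (runsWeak l).map List.length

/-- The permutation `1^m × w`, fixing `0, …, m-1` and acting by `w` shifted by `m` above. -/
def shiftPerm (m : ℕ) (w : Equiv.Perm ℕ) : Equiv.Perm ℕ where
  toFun i := if i < m then i else w (i - m) + m
  invFun i := if i < m then i else w.symm (i - m) + m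
  left_inv i := by
    dsimp only
    by_cases h : i < m
    · simp [h]
    · have h2 : ¬ (w (i - m) + m < m) := by omega
      rw [if_neg h, if_neg h2, Nat.add_sub_cancel, Equiv.symm_apply_apply]
      omega
  right_inv i := by
    dsimp only
    by_cases h : i < m
    · simp [h]
    · have h2 : ¬ (w.symm (i - m) + m < m) := by omega
      rw [if_neg h, if_neg h2, Nat.add_sub_cancel, Equiv.apply_symm_apply]
      omega

/-- The quasi-shuffle product of two (strong) compositions, as a multiset of compositions. -/
def qShuffle : List ℕ → List ℕ → Multiset (List ℕ)
  | [], β => {β}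
  | α, [] => {α}
  | a :: α, b :: β =>
      ((qShuffle α (b :: β)).map (a :: ·)) + ((qShuffle (a :: α) β).map (b :: ·)) +
        ((qShuffle α β).map ((a + b) :: ·))
termination_by α β => α.length + β.length
decreasing_by all_goals (simp only [List.length_cons]; omega)

def shuffles : List ℕ → List ℕ → Multiset (List ℕ)
  | [], B => {B}
  | A, [] => {A}
  | x :: A, y :: B =>
      ((shuffles A (y :: B)).map (x :: ·)) + ((shuffles (x :: A) B).map (y :: ·))
termination_by A B => A.length + B.length
decreasing_by all_goals (simp only [List.length_cons]; omega)

/-- The word `(2n-1)^{a_1} (2n-3)^{a_2} ⋯ 1^{a_n}` associated to a weak composition `a`. -/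
def wordA {n : ℕ} (a : Fin n → ℕ) : List ℕ :=
  (List.ofFn (fun i : Fin n => List.replicate (a i) (2 * n - 2 * (i : ℕ) - 1))).flatten

/-- The word `(2n)^{b_1} (2n-2)^{b_2} ⋯ 2^{b_n}` associated to a weak composition `b`. -/
def wordB {n : ℕ} (b : Fin n → ℕ) : List ℕ :=
  (List.ofFn (fun i : Fin n => List.replicate (b i) (2 * n - 2 * (i : ℕ)))).flatten

/-- A list (padded with trailing zeros) dominates a weak composition of length `n`. -/
def DominatesList {n : ℕ} (l : List ℕ) (a : Fin n → ℕ) : Prop :=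
  ∀ i : Fin (n + 1), psum a (i : ℕ) ≤ ((l.take (i : ℕ)).sum)

/-- The number of letters of the `A`-word (the odd letters) in the `k`-th weakly
increasing run of `C`. -/
def runCountA (C : List ℕ) (k : Fin (runsWeak C).length) : ℕ :=
  (((runsWeak C).get k).filter (fun z => z % 2 = 1)).length

/-- The number of letters of the `B`-word (the even letters) in the `k`-th weakly
increasing run of `C`. -/
def runCountB (C : List ℕ) (k : Fin (runsWeak C).length) : ℕ :=
  (((runsWeak C).get k).filter (fun z => z % 2 = 0)).length

/-- The length of the `k`-th weakly increasing run of `C`. -/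
def runLen (C : List ℕ) (k : Fin (runsWeak C).length) : ℕ :=
  ((runsWeak C).get k).length

/-- `c = bump_{(a,b)}(C)`: the unique weak composition of length `n` obtained by inserting
zero parts into `Des(C)` so that the correspondingly placed `Des_A` and `Des_B` dominate
`a` and `b`, minimal in dominance order among all such insertions. -/
def IsBumpS {n : ℕ} (a b : Fin n → ℕ) (C : List ℕ) (c : Fin n → ℕ) : Prop :=
  ∃ ι : Fin (runsWeak C).length → Fin n, StrictMono ι ∧
    c = spread ι (runLen C) ∧
    Dominates (spread ι (runCountA C)) a ∧ Dominates (spread ι (runCountB C)) b ∧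
    ∀ ι' : Fin (runsWeak C).length → Fin n, StrictMono ι' →
      Dominates (spread ι' (runCountA C)) a → Dominates (spread ι' (runCountB C)) b →
      Dominates (spread ι' (runLen C)) c

/-- The multiplicity `[c ∣ a ⧢ b]` of `c` in the slide product of `a` and `b`: the number of
shuffles `C` of the words of `a` and `b` lying in the shuffle set `SS(a,b)` with
`bump_{(a,b)}(C) = c`. -/
noncomputable def slideMult {n : ℕ} (a b c : Fin n → ℕ) : ℕ :=
  Multiset.card ((shuffles (wordA a) (wordB b)).filter
    (fun C => DominatesList ((runsWeak C).map
        (fun r => (r.filter (fun z => z % 2 = 1)).length)) a ∧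
      DominatesList ((runsWeak C).map (fun r => (r.filter (fun z => z % 2 = 0)).length)) b ∧
      IsBumpS a b C c))

/-- Membership in the quasi-shuffle set `QSS(a,b)`: a pair `(γ_a, γ_b)` of weak compositions
of a common length at most `n` with `γ_a ≥ a`, `flat(γ_a) = flat(a)`, `γ_b ≥ b`,
`flat(γ_b) = flat(b)` (after padding with trailing zeros), and all entries of
`γ_a + γ_b` positive. -/
def InQSS {n : ℕ} (a b : Fin n → ℕ) (x : (l : ℕ) × (Fin l → ℕ) × (Fin l → ℕ)) : Prop :=
  x.1 ≤ n ∧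
  Dominates (shiftComp 0 n x.2.1) a ∧ flat x.2.1 = flat a ∧
  Dominates (shiftComp 0 n x.2.2) b ∧ flat x.2.2 = flat b ∧
  ∀ k : Fin x.1, 0 < x.2.1 k + x.2.2 k

/-- `c = bump_{(a,b)}(γ_a, γ_b)`: the unique weak composition `c` of length `n` with
`flat(c) = γ_a + γ_b` whose decomposition `c = c_a + c_b` satisfies `c_a ≥ a` and
`c_b ≥ b`, minimal in dominance order among all such compositions. -/
def IsBumpQ {n : ℕ} (a b : Fin n → ℕ) (x : (l : ℕ) × (Fin l → ℕ) × (Fin l → ℕ))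
    (c : Fin n → ℕ) : Prop :=
  ∃ ι : Fin x.1 → Fin n, StrictMono ι ∧
    c = spread ι (fun k => x.2.1 k + x.2.2 k) ∧
    Dominates (spread ι x.2.1) a ∧ Dominates (spread ι x.2.2) b ∧
    ∀ ι' : Fin x.1 → Fin n, StrictMono ι' →
      Dominates (spread ι' x.2.1) a → Dominates (spread ι' x.2.2) b →
      Dominates (spread ι' (fun k => x.2.1 k + x.2.2 k)) c

/-- The multiplicity `[c ∣ a ⧻ b]` of `c` in the quasi-slide product of `a` and `b`: the
number of pairs in the quasi-shuffle set `QSS(a,b)` whose bump is `c`. -/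
noncomputable def qsMult {n : ℕ} (a b c : Fin n → ℕ) : ℕ :=
  Nat.card {x : (l : ℕ) × (Fin l → ℕ) × (Fin l → ℕ) // InQSS a b x ∧ IsBumpQ a b x c}

/-- The Stanley symmetric function `S_w`. -/
noncomputable def StanleySym (w : Equiv.Perm ℕ) : MvPowerSeries ℕ ℤ :=
  ∑ᶠ l ∈ {l : List ℕ | wordPerm l = w ∧ IsReducedWord l}, FqsFun (desStrict l)

/-!
The coefficient of `x^b` in `𝔉_a` is `1` exactly when `b ≥ a` and `flat b` refines `flat a`;
in `F_α(x_1, …, x_k)` it is `1` exactly when `flat b` refines `α` and `b` only uses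
`x_1, …, x_k`. If `a` is quasi-flat, its `ℓ` parts sit at the positions `k - ℓ + 1, …, k`,
and then every `b` on the first `k` positions whose flattening refines `flat a` dominates `a`:
the two coefficient conditions agree, so `𝔉_a = F_{flat(a)}`, which is quasisymmetric. If `a`
has a gap, moving the parts left of the gap one step to the right gives a monomial of the same
shape in `x_1, …, x_k` which does not dominate `a`, so its coefficient is `0` while that of
`x^a` is `1`.
-/

section Compositions

variable {n : ℕ}

theorem psum_eq_sum_take (a : Fin n → ℕ) (i : ℕ) : psum a i = ((List.ofFn a).take i).sum :=
  (List.sum_take_ofFn a i).symm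

theorem psum_succ (a : Fin n → ℕ) (x : Fin n) : psum a (x + 1) = psum a x + a x := by
  rw [psum_eq_sum_take, psum_eq_sum_take, List.sum_take_succ _ _ (by simp)]
  simp

theorem sum_filter_ne_zero (l : List ℕ) : (l.filter (· ≠ 0)).sum = l.sum := by
  induction l with
  | nil => rfl
  | cons x l ih => rw [List.filter_cons]; split_ifs <;> simp_all

theorem sum_flat (b : Fin n → ℕ) : (flat b).sum = ∑ i, b i := by
  rw [flat, sum_filter_ne_zero, List.sum_ofFn]

theorem ne_zero_of_mem_flat {b : Fin n → ℕ} {x : ℕ} (hx : x ∈ flat b) : x ≠ 0 := by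
  simpa [flat] using (List.mem_filter.mp hx).2

theorem flat_get_ne_zero (d : Fin n → ℕ) (t : Fin (flat d).length) : (flat d).get t ≠ 0 :=
  ne_zero_of_mem_flat (List.get_mem _ _)

theorem flat_eq_map (d : Fin n → ℕ) :
    flat d = ((List.finRange n).filter (d · ≠ 0)).map d := by
  rw [flat, List.ofFn_eq_map, List.filter_map]
  rfl

end Compositions

namespace Refines

variable {α β : List ℕ}

theorem refl (α : List ℕ) : Refines α α :=
  ⟨α.map ([·]), by induction α <;> simp_all, by simp [Function.comp_def]⟩

theorem sum_eq (h : Refines β α) : β.sum = α.sum := by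
  obtain ⟨L, rfl, rfl⟩ := h
  exact List.sum_flatten

theorem length_le (h : Refines β α) (hα : ∀ x ∈ α, x ≠ 0) : α.length ≤ β.length := by
  obtain ⟨L, rfl, rfl⟩ := h
  induction L with
  | nil => simp
  | cons l L ih =>
    have hl : l ≠ [] := by rintro rfl; exact hα 0 (by simp) rfl
    have := List.length_pos_iff.mpr hl
    have := ih (fun x hx => hα x (by simp [hx]))
    simp only [List.map_cons, List.length_cons, List.flatten_cons, List.length_append]
    omega

/-- The blocks of the refinement are nonempty, so the first `m` of them consist of at most
`m + (β.length - α.length)` parts of `β`. -/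
theorem sum_take_le (h : Refines β α) (hα : ∀ x ∈ α, x ≠ 0) (j : ℕ) :
    (α.take (j - (β.length - α.length))).sum ≤ (β.take j).sum := by
  obtain ⟨L, rfl, rfl⟩ := h
  induction L generalizing j with
  | nil => simp
  | cons l L ih =>
    have hα' : ∀ x ∈ L.map List.sum, x ≠ 0 := fun x hx => hα x (by simp_all)
    have hl : l ≠ [] := by rintro rfl; exact hα 0 (by simp) rfl
    have := List.length_pos_iff.mpr hl
    have hlen := length_le ⟨L, rfl, rfl⟩ hα'
    simp only [List.length_map] at hlen ⊢
    simp only [List.map_cons, List.flatten_cons, List.length_append, List.length_cons]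
    cases hm : j - (l.length + L.flatten.length - (L.length + 1)) with
    | zero => simp
    | succ m =>
      have hj : l.length ≤ j := by omega
      have hm' : m = (j - l.length) - (L.flatten.length - L.length) := by omega
      rw [List.take_succ_cons, List.sum_cons, List.take_append, List.take_of_length_le hj,
        List.sum_append, hm']
      have := ih (j - l.length) hα'
      simp only [List.length_map] at this
      omega

end Refines

section StrictMono

variable {ℓ n k : ℕ} {f : Fin ℓ → Fin n}

theorem _root_.StrictMono.val_add_le (hf : StrictMono f) (hk : ∀ t, (f t : ℕ) < k)
    (t : Fin ℓ) : (f t : ℕ) + ℓ ≤ k + t := by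
  obtain ⟨m, hm⟩ : ∃ m, (t : ℕ) + m + 1 = ℓ := ⟨ℓ - 1 - t, by omega⟩
  induction m generalizing t with
  | zero => have := hk t; omega
  | succ m ih =>
    have hnext := ih ⟨t + 1, by omega⟩ (by simp only; omega)
    have hlt : f t < f ⟨t + 1, by omega⟩ := hf (Fin.mk_lt_mk.mpr (by omega) : t < ⟨t + 1, _⟩)
    simp only [Fin.lt_def] at hlt hnext
    omega

theorem _root_.StrictMono.length_le (hf : StrictMono f) (hk : ∀ t, (f t : ℕ) < k) : ℓ ≤ k := by
  rcases ℓ with _ | ℓ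
  · exact Nat.zero_le _
  · have := StrictMono.val_add_le hf hk 0
    simp only [Fin.val_zero] at this
    omega

theorem _root_.StrictMono.le_val_add (hf : StrictMono f)
    (hconn : ∀ t (x : ℕ), (f t : ℕ) < x → x < k → ∃ s, (f s : ℕ) = x) (t : Fin ℓ) :
    k + t ≤ f t + ℓ := by
  obtain ⟨m, hm⟩ : ∃ m, k - f t = m := ⟨_, rfl⟩
  induction m generalizing t with
  | zero => omega
  | succ m ih =>
    by_cases hnext : (f t : ℕ) + 1 < k
    · obtain ⟨s, hs⟩ := hconn t (f t + 1) (by omega) hnext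
      have hts : t < s := hf.lt_iff_lt.mp (by rw [Fin.lt_def]; omega)
      have := ih s (by omega)
      rw [Fin.lt_def] at hts
      omega
    · omega

end StrictMono

section Spread

variable {n l : ℕ} {ι : Fin l → Fin n} {g : Fin l → ℕ}

theorem spread_apply_self (hι : ι.Injective) (g : Fin l → ℕ) (t : Fin l) :
    spread ι g (ι t) = g t := by
  rw [spread, Finset.sum_eq_single t (fun s _ hs => if_neg (hι.ne hs)) (by simp), if_pos rfl]

theorem spread_apply_of_notMem_range {x : Fin n} (hx : x ∉ Set.range ι) : spread ι g x = 0 :=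
  Finset.sum_eq_zero fun t _ => if_neg fun h => hx ⟨t, h⟩

theorem spread_ne_zero_iff (hι : ι.Injective) (hg : ∀ t, g t ≠ 0) {x : Fin n} :
    spread ι g x ≠ 0 ↔ x ∈ Set.range ι := by
  refine ⟨not_imp_comm.mp spread_apply_of_notMem_range, ?_⟩
  rintro ⟨t, rfl⟩
  rw [spread_apply_self hι]
  exact hg t

theorem eq_of_spread_eq {ι' : Fin l → Fin n} (hι : StrictMono ι) (hι' : StrictMono ι')
    (hg : ∀ t, g t ≠ 0) (h : spread ι g = spread ι' g) : ι = ι' :=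
  (hι.range_inj hι').mp <| Set.ext fun x => by
    rw [← spread_ne_zero_iff hι.injective hg, ← spread_ne_zero_iff hι'.injective hg, h]

theorem psum_spread (ι : Fin l → Fin n) (g : Fin l → ℕ) (i : ℕ) :
    psum (spread ι g) i = ∑ t with (ι t : ℕ) < i, g t := by
  unfold psum spread
  rw [Finset.sum_comm, Finset.sum_filter]
  simp

theorem flat_spread (hι : StrictMono ι) (hg : ∀ t, g t ≠ 0) :
    flat (spread ι g) = List.ofFn g := by
  have hsupp : (List.finRange n).filter (spread ι g · ≠ 0) = List.ofFn ι := by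
    refine List.Pairwise.eq_of_mem_iff (r := (· < ·)) ?_ ?_ fun x => ?_
    · exact (List.sortedLT_finRange n).pairwise.filter _
    · exact hι.sortedLT_ofFn.pairwise
    · simp [spread_ne_zero_iff hι.injective hg, List.mem_ofFn]
  rw [flat_eq_map, hsupp, List.map_ofFn]
  exact congrArg List.ofFn (funext (spread_apply_self hι.injective g))

theorem exists_strictMono_spread_flat (d : Fin n → ℕ) :
    ∃ ι : Fin (flat d).length → Fin n, StrictMono ι ∧ spread ι (flat d).get = d := by
  set S := (List.finRange n).filter (d · ≠ 0)
  have hS : S.SortedLT := ((List.sortedLT_finRange n).pairwise.filter _).sortedLT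
  have hlen : (flat d).length = S.length := by rw [flat_eq_map, List.length_map]
  have hι : StrictMono fun t : Fin (flat d).length => S[(t : ℕ)]'(hlen ▸ t.2) :=
    fun s t hst => hS.getElem_lt_getElem_of_lt hst
  refine ⟨_, hι, funext fun x => ?_⟩
  by_cases hx : x ∈ S
  · obtain ⟨i, hi, rfl⟩ := List.getElem_of_mem hx
    rw [spread_apply_self hι.injective (flat d).get ⟨i, hlen ▸ hi⟩]
    simp [S, flat_eq_map]
  · rw [show d x = 0 by simpa [S] using hx]
    refine spread_apply_of_notMem_range ?_
    rintro ⟨t, rfl⟩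
    exact hx (List.getElem_mem _)

theorem ne_zero_of_spread_flat_eq {d : Fin n → ℕ} {ι : Fin (flat d).length → Fin n}
    (hι : StrictMono ι) (hd : spread ι (flat d).get = d) (t : Fin (flat d).length) :
    d (ι t) ≠ 0 := by
  rw [← hd, spread_apply_self hι.injective]
  exact flat_get_ne_zero d t

theorem length_flat_le {k : ℕ} {d : Fin n → ℕ} (hd : ∀ x, d x ≠ 0 → (x : ℕ) < k) :
    (flat d).length ≤ k := by
  obtain ⟨ι, hι, hιd⟩ := exists_strictMono_spread_flat d
  exact hι.length_le fun t => hd _ (ne_zero_of_spread_flat_eq hι hιd t)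

end Spread

section Coefficients

open MvPolynomial

variable {n k : ℕ}

theorem coe_placeExp (γ : List ℕ) (i : Fin γ.length → Fin n) :
    ⇑(placeExp γ i) = spread i γ.get := by
  funext x
  simp [placeExp, spread, Finsupp.single_apply]

theorem coeff_slideF (a : Fin n → ℕ) (d : Fin n →₀ ℕ) :
    coeff d (slideF a) = if Dominates d a ∧ Refines (flat d) (flat a) then 1 else 0 := by
  have hmono : ∀ b : Fin n → ℕ,
      coeff d (monomial (Finsupp.equivFunOnFinite.symm b) (1 : ℤ)) = if b = d then 1 else 0 :=
    fun b => by rw [coeff_monomial]; exact if_congr (Equiv.symm_apply_eq _) rfl rfl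
  rw [slideF, coeff_sum, Finset.sum_congr rfl fun b _ => hmono b, Finset.sum_ite_eq']
  refine if_congr ⟨fun h => (Finset.mem_filter.mp h).2, fun h => Finset.mem_filter.mpr ⟨?_, h⟩⟩
    rfl rfl
  have hsum : ∑ x, d x = ∑ x, a x := by rw [← sum_flat, ← sum_flat, h.2.sum_eq]
  simp only [wcFinset, Fintype.mem_piFinset, Finset.mem_range, Nat.lt_succ_iff, ← hsum]
  exact fun x => Finset.single_le_sum (fun _ _ => Nat.zero_le _) (Finset.mem_univ x)

theorem coeff_Mqs {γ : List ℕ} (hγ : ∀ x ∈ γ, x ≠ 0) (d : Fin n →₀ ℕ) :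
    coeff d (Mqs n k γ) = if flat d = γ ∧ ∀ x, d x ≠ 0 → (x : ℕ) < k then 1 else 0 := by
  have hγ' : ∀ t, γ.get t ≠ 0 := fun t => hγ _ (List.get_mem _ _)
  have hterm : ∀ i : Fin γ.length → Fin n,
      ∏ t, (X (i t) : MvPolynomial (Fin n) ℤ) ^ γ.get t = monomial (placeExp γ i) 1 := by
    intro i
    simp [placeExp, monomial_sum_one, X_pow_eq_monomial]
  rw [Mqs, coeff_sum, Finset.sum_congr rfl fun i _ => by rw [hterm, coeff_monomial]]
  split_ifs with h
  · obtain ⟨rfl, hk⟩ := h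
    obtain ⟨ι, hι, hιd⟩ := exists_strictMono_spread_flat d
    have hιk : ∀ t, (ι t : ℕ) < k := fun t => hk _ (ne_zero_of_spread_flat_eq hι hιd t)
    rw [Finset.sum_eq_single_of_mem ι (by simp [hι, hιk])]
    · rw [if_pos (DFunLike.coe_injective (by rw [coe_placeExp, hιd]))]
    · intro i hi hne
      refine if_neg fun hid => hne (eq_of_spread_eq (Finset.mem_filter.mp hi).2.1 hι hγ' ?_)
      rw [← coe_placeExp, hid, hιd]
  · refine Finset.sum_eq_zero fun i hi => if_neg fun hid => h ?_
    obtain ⟨-, hi, hik⟩ := Finset.mem_filter.mp hi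
    rw [← hid, coe_placeExp, flat_spread hi hγ', List.ofFn_get]
    refine ⟨rfl, fun x hx => ?_⟩
    obtain ⟨t, rfl⟩ := (spread_ne_zero_iff hi.injective hγ').mp hx
    exact hik t

theorem coeff_Fqs (α : List ℕ) (d : Fin n →₀ ℕ) :
    coeff d (Fqs n k α) = if Refines (flat d) α ∧ ∀ x, d x ≠ 0 → (x : ℕ) < k then 1 else 0 := by
  rw [Fqs, coeff_sum, Finset.sum_congr rfl fun c _ =>
    coeff_Mqs (fun x hx => (c.blocks_pos hx).ne') d]
  split_ifs with h
  · let c₀ : Composition α.sum :=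
      ⟨flat d, fun hx => Nat.pos_of_ne_zero (ne_zero_of_mem_flat hx), h.1.sum_eq⟩
    rw [Finset.sum_eq_single_of_mem c₀ (by simp [c₀, h.1, length_flat_le h.2])]
    · exact if_pos ⟨rfl, h.2⟩
    · exact fun c _ hne => if_neg fun hc => hne (Composition.ext hc.1.symm)
  · refine Finset.sum_eq_zero fun c hc => if_neg fun hcd => h ⟨?_, hcd.2⟩
    rw [hcd.1]
    exact (Finset.mem_filter.mp hc).2.1

theorem isQuasisymmetricIn_Fqs (α : List ℕ) : IsQuasisymmetricIn k (Fqs n k α) := by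
  intro γ hγ i j hi hj hik hjk
  have hγ' : ∀ t, γ.get t ≠ 0 := fun t => (hγ _ (List.get_mem _ _)).ne'
  have hcoeff : ∀ i : Fin γ.length → Fin n, StrictMono i → (∀ t, (i t : ℕ) < k) →
      coeff (placeExp γ i) (Fqs n k α) = if Refines γ α then 1 else 0 := by
    intro i hi hik
    rw [coeff_Fqs, coe_placeExp, flat_spread hi hγ', List.ofFn_get]
    refine if_congr (and_iff_left fun x hx => ?_) rfl rfl
    obtain ⟨t, rfl⟩ := (spread_ne_zero_iff hi.injective hγ').mp hx
    exact hik t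
  rw [hcoeff i hi hik, hcoeff j hj hjk]

end Coefficients

section Dominance

variable {n k : ℕ} {a b : Fin n → ℕ}

theorem Dominates.lt_of_ne_zero (hba : Dominates b a) (hsum : ∑ x, b x = ∑ x, a x)
    (hak : ∀ j, a j ≠ 0 → (j : ℕ) < k) {x : Fin n} (hx : b x ≠ 0) : (x : ℕ) < k := by
  by_contra hxk
  have hk : psum a k ≤ psum b k := hba ⟨k, by omega⟩
  have hpa : psum a k = ∑ j, a j := Finset.sum_filter_of_ne fun j _ hj => hak j hj
  have hsplit := Finset.sum_filter_add_sum_filter_not Finset.univ (fun j : Fin n => (j : ℕ) < k) b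
  have hbx : b x ≤ ∑ j : Fin n with ¬j.val < k, b j :=
    Finset.single_le_sum (fun _ _ => Nat.zero_le _) (by simpa using hxk)
  unfold psum at hk hpa
  omega

theorem QuasiFlat.val_add_length_flat (ha : QuasiFlat a) (hak : ∀ j, a j ≠ 0 → (j : ℕ) < k)
    (hlast : ∃ j, a j ≠ 0 ∧ (j : ℕ) + 1 = k) {ι : Fin (flat a).length → Fin n}
    (hι : StrictMono ι) (hιa : spread ι (flat a).get = a) (t : Fin (flat a).length) :
    (ι t : ℕ) + (flat a).length = k + t := by
  refine le_antisymm (hι.val_add_le (fun t => hak _ (ne_zero_of_spread_flat_eq hι hιa t)) t)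
    (hι.le_val_add (fun s x hsx hxk => ?_) t)
  obtain ⟨j, hj, hjk⟩ := hlast
  let x' : Fin n := ⟨x, by have := j.2; omega⟩
  have hx : spread ι (flat a).get x' ≠ 0 := by
    rw [hιa]
    exact ha (ι s) x' j (Fin.le_def.mpr hsx.le) (Fin.le_def.mpr (by simp only [x']; omega))
      (ne_zero_of_spread_flat_eq hι hιa s) hj
  obtain ⟨s', hs'⟩ := (spread_ne_zero_iff hι.injective (flat_get_ne_zero a)).mp hx
  exact ⟨s', by rw [hs']⟩

/-- The partial sums of `a` are those of `flat a`, delayed to the positions `k - ℓ, …, k - 1`,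
while a `b` on the first `k` positions reaches each partial sum of `flat b` at least as early;
`flat a` being coarser than `flat b` then gives the comparison. -/
theorem QuasiFlat.dominates_of_refines (ha : QuasiFlat a) (hak : ∀ j, a j ≠ 0 → (j : ℕ) < k)
    (hlast : ∃ j, a j ≠ 0 ∧ (j : ℕ) + 1 = k) (hbk : ∀ j, b j ≠ 0 → (j : ℕ) < k)
    (hba : Refines (flat b) (flat a)) : Dominates b a := by
  obtain ⟨ιa, hιa, hιad⟩ := exists_strictMono_spread_flat a
  obtain ⟨ιb, hιb, hιbd⟩ := exists_strictMono_spread_flat b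
  have hιbk : ∀ t, (ιb t : ℕ) < k := fun t => hbk _ (ne_zero_of_spread_flat_eq hιb hιbd t)
  have hlen := hba.length_le fun x hx => ne_zero_of_mem_flat hx
  intro i
  calc psum a i = ∑ t with (ιa t : ℕ) < i, (flat a).get t := by rw [← psum_spread, hιad]
    _ = ∑ t : Fin (flat a).length with t.val < i + (flat a).length - k, (flat a).get t := by
      refine Finset.sum_congr (Finset.filter_congr fun t _ => ?_) fun _ _ => rfl
      have := ha.val_add_length_flat hak hlast hιa hιad t
      omega
    _ = ((flat a).take (i + (flat a).length - k)).sum := by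
      rw [← List.sum_take_ofFn, List.ofFn_get]
    _ ≤ ((flat b).take (i + (flat b).length - k)).sum := by
      have h := hba.sum_take_le (fun x hx => ne_zero_of_mem_flat hx) (i + (flat b).length - k)
      rwa [show i + (flat b).length - k - ((flat b).length - (flat a).length) =
        i + (flat a).length - k by omega] at h
    _ = ∑ t : Fin (flat b).length with t.val < i + (flat b).length - k, (flat b).get t := by
      rw [← List.sum_take_ofFn, List.ofFn_get]
    _ ≤ ∑ t with (ιb t : ℕ) < i, (flat b).get t := by
      refine Finset.sum_le_sum_of_subset fun t => ?_
      have := hιb.val_add_le hιbk t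
      simp only [Finset.mem_filter, Finset.mem_univ, true_and]
      omega
    _ = psum b i := by rw [← psum_spread, hιbd]

theorem QuasiFlat.slideF_eq_Fqs (ha : QuasiFlat a) (hak : ∀ j, a j ≠ 0 → (j : ℕ) < k)
    (hlast : ∃ j, a j ≠ 0 ∧ (j : ℕ) + 1 = k) : slideF a = Fqs n k (flat a) := by
  ext d
  rw [coeff_slideF, coeff_Fqs]
  refine if_congr ⟨fun ⟨hda, hflat⟩ => ⟨hflat, fun x hx => ?_⟩,
    fun ⟨hflat, hdk⟩ => ⟨ha.dominates_of_refines hak hlast hdk hflat, hflat⟩⟩ rfl rfl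
  exact hda.lt_of_ne_zero (by rw [← sum_flat, ← sum_flat, hflat.sum_eq]) hak hx

/-- Moving the parts in front of a free position `y` one step to the right. -/
theorem exists_shift_of_forall_ne {l : ℕ} {ι : Fin l → Fin n} (hι : StrictMono ι)
    (hιk : ∀ t, (ι t : ℕ) < k) {y : Fin n} (hιy : ∀ t, ι t ≠ y) (hyk : (y : ℕ) < k) :
    ∃ σ : Fin l → Fin n, StrictMono σ ∧ (∀ t, (σ t : ℕ) < k) ∧
      ∀ (g : Fin l → ℕ) (x : ℕ), x < y → psum (spread σ g) (x + 1) = psum (spread ι g) x := by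
  have hιy' : ∀ t, (ι t : ℕ) ≠ y := fun t h => hιy t (Fin.ext h)
  let σ : Fin l → Fin n := fun t => if h : (ι t : ℕ) < y then ⟨ι t + 1, by omega⟩ else ι t
  have hσ : ∀ t, (σ t : ℕ) = if (ι t : ℕ) < y then (ι t : ℕ) + 1 else (ι t : ℕ) := fun t => by
    simp only [σ]
    split_ifs <;> rfl
  refine ⟨σ, fun s t hst => ?_, fun t => ?_, fun g x hx => ?_⟩
  · have := Fin.lt_def.mp (hι hst)
    have := hιy' s
    have := hιy' t
    rw [Fin.lt_def, hσ, hσ]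
    split_ifs <;> omega
  · have := hιk t
    rw [hσ]
    split_ifs <;> omega
  · rw [psum_spread, psum_spread]
    refine Finset.sum_congr (Finset.filter_congr fun t _ => ?_) fun _ _ => rfl
    have := hιy' t
    rw [hσ]
    split_ifs <;> omega

theorem quasiFlat_of_isQuasisymmetricIn (hak : ∀ j, a j ≠ 0 → (j : ℕ) < k)
    (hq : IsQuasisymmetricIn k (slideF a)) : QuasiFlat a := by
  intro x y z hxy hyz hx hz
  by_contra! hy
  obtain ⟨ι, hι, hιa⟩ := exists_strictMono_spread_flat a
  have hιk : ∀ t, (ι t : ℕ) < k := fun t => hak _ (ne_zero_of_spread_flat_eq hι hιa t)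
  have hιy : ∀ t, ι t ≠ y := fun t h => ne_zero_of_spread_flat_eq hι hιa t (h ▸ hy)
  have hxy' : (x : ℕ) < y := lt_of_le_of_ne hxy fun h => hx (Fin.ext h ▸ hy)
  obtain ⟨σ, hσ, hσk, hσpsum⟩ :=
    exists_shift_of_forall_ne hι hιk hιy (lt_of_le_of_lt hyz (hak z hz))
  have h := hq (flat a) (fun x hx => Nat.pos_of_ne_zero (ne_zero_of_mem_flat hx)) ι σ hι hσ
    hιk hσk
  rw [coeff_slideF, coeff_slideF, coe_placeExp, coe_placeExp, hιa,
    if_pos ⟨fun _ => le_rfl, Refines.refl _⟩] at h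
  have hdom : Dominates (spread σ (flat a).get) a := by
    by_contra hnd
    rw [if_neg fun h' => hnd h'.1] at h
    exact one_ne_zero h
  have key : psum a (x + 1) ≤ psum (spread σ (flat a).get) (x + 1) := hdom ⟨x + 1, by omega⟩
  rw [hσpsum _ _ hxy', hιa, psum_succ] at key
  omega

end Dominance

/-- `𝔉_a` is quasisymmetric in `x_1, …, x_k` iff `a` is quasi-flat, where `k`
is the largest index with `a_k ≠ 0`; in that case `𝔉_a = F_{flat(a)}(x_1, …, x_k)`. -/
theorem fundamentalSlide_quasisymmetric_iff_quasiFlat {n : ℕ} (a : Fin n → ℕ) (k : ℕ)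
    (hk : ∃ i : Fin n, (i : ℕ) + 1 = k ∧ a i ≠ 0 ∧ ∀ j : Fin n, a j ≠ 0 → j ≤ i) :
    (IsQuasisymmetricIn k (slideF a) ↔ QuasiFlat a) ∧
    (QuasiFlat a → slideF a = Fqs n k (flat a)) := by
  obtain ⟨i, hik, hi, hmax⟩ := hk
  have hak : ∀ j, a j ≠ 0 → (j : ℕ) < k := fun j hj => by
    have := Fin.le_def.mp (hmax j hj)
    omega
  have hslide : QuasiFlat a → slideF a = Fqs n k (flat a) := fun ha =>
    ha.slideF_eq_Fqs hak ⟨i, hi, hik⟩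
  exact ⟨⟨quasiFlat_of_isQuasisymmetricIn hak, fun ha => hslide ha ▸ isQuasisymmetricIn_Fqs _⟩,
    hslide⟩

end SlidePaper
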